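/- Let {(P_U(u), ρ^u)} be a finite ensemble of states on ℂ^{d_A}, and for each u let ρ^u = Σ_x α_{u,x} |ψ_{u,x}⟩⟨ψ_{u,x}| be a decomposition into pure states with α_{u,x} ≥ 0 summing to 1 over x. Consider the refined pure-state ensemble indexed by pairs (u,x) with probabilities P_U(u)·α_{u,x} and states |ψ_{u,x}⟩⟨ψ_{u,x}|, and for each fixed u the conditional pure-state ensemble {(α_{u,x}, |ψ_{u,x}⟩⟨ψ_{u,x}|)}. Then, writing χ_B and χ_E for Holevo quantities with respect to N_B and N_E, one has the chain-rule identity: χ_B({P_U, ρ^u}) − χ_E({P_U, ρ^u}) = [χ_B(refined) − χ_E(refined)] − Σ_u P_U(u) [χ_B(conditional ensemble at u) − χ_E(conditional ensemble at u)]. Moreover χ_B(refined) − χ_E(refined) = I_c(ρ̄) where ρ̄ = Σ_u P_U(u) ρ^u. -/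

import Mathlib

open Matrix BigOperators
open scoped ComplexOrder

noncomputable section

/-- Matrix logarithm via the spectral decomposition (junk value `0` off Hermitian matrices;
eigenvalue `0` contributes `Real.log 0 = 0`). -/
def matLog {n : Type*} [Fintype n] [DecidableEq n] (ρ : Matrix n n ℂ) : Matrix n n ℂ :=
  if h : ρ.IsHermitian then
    (h.eigenvectorUnitary : Matrix n n ℂ) *
      Matrix.diagonal (fun i => (Real.log (h.eigenvalues i) : ℂ)) *
      (h.eigenvectorUnitary : Matrix n n ℂ)ᴴ
  else 0

/-- Von Neumann entropy `H(ρ) = -Tr[ρ log ρ]`. -/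
def vnEntropy {n : Type*} [Fintype n] [DecidableEq n] (ρ : Matrix n n ℂ) : ℝ :=
  - (ρ * matLog ρ).trace.re

/-- Quantum relative entropy `D(ρ‖σ) = Tr[ρ (log ρ - log σ)]`. -/
def relEntropy {n : Type*} [Fintype n] [DecidableEq n] (ρ σ : Matrix n n ℂ) : ℝ :=
  (ρ * (matLog ρ - matLog σ)).trace.re

/-- A state: positive semidefinite with unit trace. -/
def IsState {n : Type*} [Fintype n] (ρ : Matrix n n ℂ) : Prop :=
  ρ.PosSemidef ∧ ρ.trace = 1

/-- A pure (rank-one) state `|ψ⟩⟨ψ|` for a unit vector `ψ`. -/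
def IsPureState {n : Type*} [Fintype n] (ρ : Matrix n n ℂ) : Prop :=
  ∃ ψ : n → ℂ, (∑ i, Complex.normSq (ψ i)) = 1 ∧ ρ = Matrix.vecMulVec ψ (star ψ)

/-- Support (range) inclusion for matrices. -/
def suppLE {n : Type*} [Fintype n] [DecidableEq n] (ρ σ : Matrix n n ℂ) : Prop :=
  LinearMap.range (Matrix.toLin' ρ) ≤ LinearMap.range (Matrix.toLin' σ)

/-- Partial trace over the second tensor factor. -/
def ptraceSnd {α β : Type*} [Fintype β] (M : Matrix (α × β) (α × β) ℂ) : Matrix α α ℂ :=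
  Matrix.of fun i j => ∑ k, M (i, k) (j, k)

/-- Partial trace over the first tensor factor. -/
def ptraceFst {α β : Type*} [Fintype α] (M : Matrix (α × β) (α × β) ℂ) : Matrix β β ℂ :=
  Matrix.of fun i j => ∑ k, M (k, i) (k, j)

variable {dA dB dE : ℕ}

/-- The channel `N_B(ρ) = Tr_E[U ρ U†]`. -/
def chanB (U : Matrix (Fin dB × Fin dE) (Fin dA) ℂ) (ρ : Matrix (Fin dA) (Fin dA) ℂ) :
    Matrix (Fin dB) (Fin dB) ℂ := ptraceSnd (U * ρ * Uᴴ)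

/-- The complementary channel `N_E(ρ) = Tr_B[U ρ U†]`. -/
def chanE (U : Matrix (Fin dB × Fin dE) (Fin dA) ℂ) (ρ : Matrix (Fin dA) (Fin dA) ℂ) :
    Matrix (Fin dE) (Fin dE) ℂ := ptraceFst (U * ρ * Uᴴ)

/-- Coherent information `I_c(ρ) = H(N_B(ρ)) - H(N_E(ρ))`. -/
def cohInfo (U : Matrix (Fin dB × Fin dE) (Fin dA) ℂ) (ρ : Matrix (Fin dA) (Fin dA) ℂ) : ℝ :=
  vnEntropy (chanB U ρ) - vnEntropy (chanE U ρ)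

/-- Holevo quantity of the ensemble `(p, σ)` with respect to the channel `N`. -/
def holevo {ι inn out : Type*} [Fintype ι] [Fintype out] [DecidableEq out]
    [AddCommMonoid (Matrix inn inn ℂ)]
    (N : Matrix inn inn ℂ → Matrix out out ℂ)
    (p : ι → ℝ) (σ : ι → Matrix inn inn ℂ) : ℝ :=
  vnEntropy (N (∑ u, (p u : ℂ) • σ u)) - ∑ u, p u * vnEntropy (N (σ u))

/-- A finite ensemble: a probability distribution together with states. -/
def IsEnsemble {ι inn : Type*} [Fintype ι] [Fintype inn]
    (p : ι → ℝ) (σ : ι → Matrix inn inn ℂ) : Prop :=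
  (∀ u, 0 ≤ p u) ∧ (∑ u, p u = 1) ∧ (∀ u, IsState (σ u))

/-- `Q^{(1)}`: optimized coherent information. -/
def Q1 (U : Matrix (Fin dB × Fin dE) (Fin dA) ℂ) : ℝ :=
  sSup { r | ∃ ρ, IsState ρ ∧ r = cohInfo U ρ }

/-- `C_p^{(1)}`: optimized difference of Holevo quantities. -/
def Cp1 (U : Matrix (Fin dB × Fin dE) (Fin dA) ℂ) : ℝ :=
  sSup { r | ∃ (m : ℕ) (p : Fin m → ℝ) (σ : Fin m → Matrix (Fin dA) (Fin dA) ℂ),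
    IsEnsemble p σ ∧ r = holevo (chanB U) p σ - holevo (chanE U) p σ }

/-!
Both Holevo differences unfold to `I_c(ρ̄) - Σ_u P(u) I_c(ρ^u)` for the ensemble at hand, so the
chain rule is bookkeeping once `I_c` is known to vanish on pure states. That is the Schmidt
argument: for a vector `w` on `B ⊗ E` with coefficient matrix `A`, the two marginals are `A Aᴴ`
and `(Aᴴ A)ᵀ`, and `log (A Aᴴ) * A = A * log (Aᴴ A)` together with cyclicity of the trace gives
them equal entropies.
-/

namespace Matrix

variable {m n R : Type*} [Fintype m] [Fintype n] [DecidableEq m] [DecidableEq n]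

/-- An entry `C i j ≠ 0` forces `d i = e j`, so any function of the diagonals still
intertwines `C`. -/
theorem diagonal_comp_mul_eq_mul_diagonal_comp [CommRing R] [NoZeroDivisors R]
    {d : m → R} {e : n → R} {C : Matrix m n R} (h : diagonal d * C = C * diagonal e)
    (g : R → R) : diagonal (g ∘ d) * C = C * diagonal (g ∘ e) := by
  ext i j
  have hij : d i * C i j = e j * C i j := by simpa [mul_comm] using congrFun₂ h i j
  simp only [diagonal_mul, mul_diagonal, Function.comp_apply]
  by_cases hC : C i j = 0
  · simp [hC]
  · rw [mul_right_cancel₀ hC hij, mul_comm]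

theorem conj_diagonal_comp_mul_eq_mul_conj_diagonal_comp [CommRing R] [StarRing R]
    [NoZeroDivisors R] {V : Matrix m m R} {W : Matrix n n R}
    (hV : V ∈ unitaryGroup m R) (hW : W ∈ unitaryGroup n R)
    {d : m → R} {e : n → R} {A : Matrix m n R}
    (h : V * diagonal d * Vᴴ * A = A * (W * diagonal e * Wᴴ)) (g : R → R) :
    V * diagonal (g ∘ d) * Vᴴ * A = A * (W * diagonal (g ∘ e) * Wᴴ) := by
  have hV₁ : V * Vᴴ = 1 := mem_unitaryGroup_iff.mp hV
  have hV₂ : Vᴴ * V = 1 := mem_unitaryGroup_iff'.mp hV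
  have hW₁ : W * Wᴴ = 1 := mem_unitaryGroup_iff.mp hW
  have hW₂ : Wᴴ * W = 1 := mem_unitaryGroup_iff'.mp hW
  set C := Vᴴ * A * W
  have hL (D : Matrix m m R) : V * D * Vᴴ * A = V * (D * C) * Wᴴ := by
    simp only [C, Matrix.mul_assoc, hW₁, Matrix.mul_one]
  have hR (E : Matrix n n R) : A * (W * E * Wᴴ) = V * (C * E) * Wᴴ := by
    simp only [C, ← Matrix.mul_assoc, hV₁, Matrix.one_mul]
  have hcancel (X : Matrix m n R) : Vᴴ * (V * X * Wᴴ) * W = X := by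
    simp only [Matrix.mul_assoc, hW₂, Matrix.mul_one, ← Matrix.mul_assoc Vᴴ, hV₂, Matrix.one_mul]
  have hC : diagonal d * C = C * diagonal e := by
    rw [← hcancel (diagonal d * C), ← hL, h, hR, hcancel]
  rw [hL, hR, diagonal_comp_mul_eq_mul_diagonal_comp hC g]

theorem IsHermitian.conj_diagonal_eigenvalues {M : Matrix n n ℂ} (hM : M.IsHermitian) :
    (hM.eigenvectorUnitary : Matrix n n ℂ) * diagonal (fun i => (hM.eigenvalues i : ℂ)) *
      (hM.eigenvectorUnitary : Matrix n n ℂ)ᴴ = M := by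
  conv_rhs => rw [hM.spectral_theorem, Unitary.conjStarAlgAut_apply, star_eq_conjTranspose]
  rfl

theorem transpose_conj_diagonal [CommSemiring R] [StarRing R] (V : Matrix n n R) (d : n → R) :
    (V * diagonal d * Vᴴ)ᵀ = V.map star * diagonal d * (V.map star)ᴴ := by
  rw [transpose_mul, transpose_mul, diagonal_transpose, ← Matrix.mul_assoc,
    conjTranspose_transpose]
  congr 1
  ext i j
  simp

end Matrix

section MatLog

variable {m n : Type*} [Fintype m] [Fintype n] [DecidableEq m] [DecidableEq n]

theorem matLog_mul_eq_mul_matLog {M : Matrix m m ℂ} {N : Matrix n n ℂ} {A : Matrix m n ℂ}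
    (hM : M.IsHermitian) (hN : N.IsHermitian) (h : M * A = A * N) :
    matLog M * A = A * matLog N := by
  have := conj_diagonal_comp_mul_eq_mul_conj_diagonal_comp hM.eigenvectorUnitary.2
    hN.eigenvectorUnitary.2 (by rwa [hM.conj_diagonal_eigenvalues, hN.conj_diagonal_eigenvalues])
    (fun z => (Real.log z.re : ℂ))
  simpa [matLog, hM, hN, Function.comp_def] using this

theorem matLog_conj_diagonal {W : Matrix n n ℂ} (hW : W ∈ unitaryGroup n ℂ) (g : n → ℝ) :
    matLog (W * diagonal (fun i => (g i : ℂ)) * Wᴴ)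
      = W * diagonal (fun i => (Real.log (g i) : ℂ)) * Wᴴ := by
  have hM : (W * diagonal (fun i => (g i : ℂ)) * Wᴴ).IsHermitian :=
    isHermitian_mul_mul_conjTranspose _ <|
      isHermitian_diagonal_iff.mpr fun i => Complex.conj_ofReal (g i)
  have := conj_diagonal_comp_mul_eq_mul_conj_diagonal_comp hM.eigenvectorUnitary.2 hW
    (A := 1) (by rw [hM.conj_diagonal_eigenvalues, Matrix.mul_one, Matrix.one_mul])
    (fun z => (Real.log z.re : ℂ))
  simpa [matLog, hM, Function.comp_def] using this

theorem matLog_transpose {M : Matrix n n ℂ} (hM : M.IsHermitian) :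
    matLog Mᵀ = (matLog M)ᵀ := by
  set V := (hM.eigenvectorUnitary : Matrix n n ℂ)
  have hV : V.map star ∈ unitaryGroup n ℂ :=
    map_star_mem_unitaryGroup_iff.mpr hM.eigenvectorUnitary.2
  conv_lhs => rw [← hM.conj_diagonal_eigenvalues, transpose_conj_diagonal,
    matLog_conj_diagonal hV]
  rw [matLog, dif_pos hM, transpose_conj_diagonal]

theorem vnEntropy_transpose {M : Matrix n n ℂ} (hM : M.IsHermitian) :
    vnEntropy Mᵀ = vnEntropy M := by
  rw [vnEntropy, vnEntropy, matLog_transpose hM, ← transpose_mul, trace_transpose,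
    trace_mul_comm]

theorem vnEntropy_mul_conjTranspose_self (A : Matrix m n ℂ) :
    vnEntropy (A * Aᴴ) = vnEntropy (Aᴴ * A) := by
  have h := matLog_mul_eq_mul_matLog (isHermitian_mul_conjTranspose_self A)
    (isHermitian_conjTranspose_mul_self A) (Matrix.mul_assoc A Aᴴ A)
  rw [vnEntropy, vnEntropy, Matrix.mul_assoc, trace_mul_comm A, Matrix.mul_assoc, h,
    ← Matrix.mul_assoc]

end MatLog

section PureStates

variable {β γ : Type*}

theorem ptraceSnd_vecMulVec_star [Fintype γ] (w : β × γ → ℂ) :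
    ptraceSnd (vecMulVec w (star w)) = of (Function.curry w) * (of (Function.curry w))ᴴ := by
  ext i j
  simp [ptraceSnd, vecMulVec_apply, mul_apply]

theorem ptraceFst_vecMulVec_star [Fintype β] (w : β × γ → ℂ) :
    ptraceFst (vecMulVec w (star w)) = ((of (Function.curry w))ᴴ * of (Function.curry w))ᵀ := by
  ext i j
  simp [ptraceFst, vecMulVec_apply, mul_apply, mul_comm]

theorem vnEntropy_ptraceSnd_eq_ptraceFst [Fintype β] [Fintype γ] [DecidableEq β] [DecidableEq γ]
    (w : β × γ → ℂ) :
    vnEntropy (ptraceSnd (vecMulVec w (star w)))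
      = vnEntropy (ptraceFst (vecMulVec w (star w))) := by
  rw [ptraceSnd_vecMulVec_star, ptraceFst_vecMulVec_star,
    vnEntropy_transpose (isHermitian_conjTranspose_mul_self _), vnEntropy_mul_conjTranspose_self]

theorem mul_vecMulVec_star_mul_conjTranspose {l : Type*} [Fintype l] (U : Matrix β l ℂ)
    (φ : l → ℂ) : U * vecMulVec φ (star φ) * Uᴴ = vecMulVec (U *ᵥ φ) (star (U *ᵥ φ)) := by
  rw [mul_vecMulVec, vecMulVec_mul, star_mulVec]

end PureStates

theorem cohInfo_vecMulVec_star (U : Matrix (Fin dB × Fin dE) (Fin dA) ℂ) (φ : Fin dA → ℂ) :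
    cohInfo U (vecMulVec φ (star φ)) = 0 := by
  rw [cohInfo, chanB, chanE, mul_vecMulVec_star_mul_conjTranspose,
    vnEntropy_ptraceSnd_eq_ptraceFst, sub_self]

section Holevo

variable {ι : Type*} [Fintype ι] (U : Matrix (Fin dB × Fin dE) (Fin dA) ℂ) (p : ι → ℝ)

theorem holevo_chanB_sub_holevo_chanE (σ : ι → Matrix (Fin dA) (Fin dA) ℂ) :
    holevo (chanB U) p σ - holevo (chanE U) p σ
      = cohInfo U (∑ i, (p i : ℂ) • σ i) - ∑ i, p i * cohInfo U (σ i) := by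
  simp only [holevo, cohInfo, mul_sub, Finset.sum_sub_distrib]
  ring

theorem holevo_chanB_sub_holevo_chanE_of_pure (φ : ι → Fin dA → ℂ) :
    holevo (chanB U) p (fun i => vecMulVec (φ i) (star (φ i)))
        - holevo (chanE U) p (fun i => vecMulVec (φ i) (star (φ i)))
      = cohInfo U (∑ i, (p i : ℂ) • vecMulVec (φ i) (star (φ i))) := by
  simp [holevo_chanB_sub_holevo_chanE, cohInfo_vecMulVec_star]

end Holevo

theorem holevo_difference_chain_rule_general
    {dA dB dE : ℕ}
    (U : Matrix (Fin dB × Fin dE) (Fin dA) ℂ)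
    (m r : ℕ) (P : Fin m → ℝ) (ρ : Fin m → Matrix (Fin dA) (Fin dA) ℂ)
    (α : Fin m → Fin r → ℝ) (ψ : Fin m → Fin r → Fin dA → ℂ)
    (hdecomp : ∀ u, ρ u =
      ∑ x, (α u x : ℂ) • Matrix.vecMulVec (ψ u x) (star (ψ u x))) :
    (holevo (chanB U) P ρ - holevo (chanE U) P ρ
      = (holevo (chanB U) (fun ux : Fin m × Fin r => P ux.1 * α ux.1 ux.2)
            (fun ux => Matrix.vecMulVec (ψ ux.1 ux.2) (star (ψ ux.1 ux.2)))
          - holevo (chanE U) (fun ux : Fin m × Fin r => P ux.1 * α ux.1 ux.2)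
            (fun ux => Matrix.vecMulVec (ψ ux.1 ux.2) (star (ψ ux.1 ux.2))))
        - ∑ u, P u *
          (holevo (chanB U) (α u)
              (fun x => Matrix.vecMulVec (ψ u x) (star (ψ u x)))
            - holevo (chanE U) (α u)
              (fun x => Matrix.vecMulVec (ψ u x) (star (ψ u x)))))
    ∧ holevo (chanB U) (fun ux : Fin m × Fin r => P ux.1 * α ux.1 ux.2)
          (fun ux => Matrix.vecMulVec (ψ ux.1 ux.2) (star (ψ ux.1 ux.2)))
        - holevo (chanE U) (fun ux : Fin m × Fin r => P ux.1 * α ux.1 ux.2)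
          (fun ux => Matrix.vecMulVec (ψ ux.1 ux.2) (star (ψ ux.1 ux.2)))
      = cohInfo U (∑ u, (P u : ℂ) • ρ u) := by
  have hconditional (u : Fin m) :
      holevo (chanB U) (α u) (fun x => vecMulVec (ψ u x) (star (ψ u x)))
          - holevo (chanE U) (α u) (fun x => vecMulVec (ψ u x) (star (ψ u x)))
        = cohInfo U (ρ u) := by
    rw [holevo_chanB_sub_holevo_chanE_of_pure, hdecomp]
  have hrefined :
      holevo (chanB U) (fun ux : Fin m × Fin r => P ux.1 * α ux.1 ux.2)
          (fun ux => vecMulVec (ψ ux.1 ux.2) (star (ψ ux.1 ux.2)))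
        - holevo (chanE U) (fun ux : Fin m × Fin r => P ux.1 * α ux.1 ux.2)
          (fun ux => vecMulVec (ψ ux.1 ux.2) (star (ψ ux.1 ux.2)))
        = cohInfo U (∑ u, (P u : ℂ) • ρ u) := by
    rw [holevo_chanB_sub_holevo_chanE_of_pure U _ (fun ux : Fin m × Fin r => ψ ux.1 ux.2)]
    simp only [Fintype.sum_prod_type, hdecomp, Finset.smul_sum, smul_smul, Complex.ofReal_mul]
  refine ⟨?_, hrefined⟩
  rw [hrefined, holevo_chanB_sub_holevo_chanE]
  simp only [hconditional]

/-- Chain rule for differences of Holevo quantities: refining an ensemble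
`{(P_U(u), ρ^u)}` by pure-state decompositions `ρ^u = Σ_x α_{u,x} |ψ_{u,x}⟩⟨ψ_{u,x}|` gives
`χ_B − χ_E = [χ_B(refined) − χ_E(refined)] − Σ_u P_U(u)[χ_B(cond. at u) − χ_E(cond. at u)]`,
and the refined difference equals the coherent information of the average state. -/
theorem holevo_difference_chain_rule
    {dA dB dE : ℕ} (hdA : 1 ≤ dA) (hdB : 1 ≤ dB) (hdE : 1 ≤ dE)
    (U : Matrix (Fin dB × Fin dE) (Fin dA) ℂ) (hU : Uᴴ * U = 1)
    (m r : ℕ) (P : Fin m → ℝ) (ρ : Fin m → Matrix (Fin dA) (Fin dA) ℂ)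
    (hens : IsEnsemble P ρ)
    (α : Fin m → Fin r → ℝ) (ψ : Fin m → Fin r → Fin dA → ℂ)
    (hα : ∀ u x, 0 ≤ α u x) (hαsum : ∀ u, ∑ x, α u x = 1)
    (hψ : ∀ u x, (∑ i, Complex.normSq (ψ u x i)) = 1)
    (hdecomp : ∀ u, ρ u =
      ∑ x, (α u x : ℂ) • Matrix.vecMulVec (ψ u x) (star (ψ u x))) :
    (holevo (chanB U) P ρ - holevo (chanE U) P ρ
      = (holevo (chanB U) (fun ux : Fin m × Fin r => P ux.1 * α ux.1 ux.2)
            (fun ux => Matrix.vecMulVec (ψ ux.1 ux.2) (star (ψ ux.1 ux.2)))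
          - holevo (chanE U) (fun ux : Fin m × Fin r => P ux.1 * α ux.1 ux.2)
            (fun ux => Matrix.vecMulVec (ψ ux.1 ux.2) (star (ψ ux.1 ux.2))))
        - ∑ u, P u *
          (holevo (chanB U) (α u)
              (fun x => Matrix.vecMulVec (ψ u x) (star (ψ u x)))
            - holevo (chanE U) (α u)
              (fun x => Matrix.vecMulVec (ψ u x) (star (ψ u x)))))
    ∧ holevo (chanB U) (fun ux : Fin m × Fin r => P ux.1 * α ux.1 ux.2)
          (fun ux => Matrix.vecMulVec (ψ ux.1 ux.2) (star (ψ ux.1 ux.2)))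
        - holevo (chanE U) (fun ux : Fin m × Fin r => P ux.1 * α ux.1 ux.2)
          (fun ux => Matrix.vecMulVec (ψ ux.1 ux.2) (star (ψ ux.1 ux.2)))
      = cohInfo U (∑ u, (P u : ℂ) • ρ u) :=
  holevo_difference_chain_rule_general U m r P ρ α ψ hdecomp

end
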